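/- arXiv:2406.05825 — 2 statements merged into one kernel-verified Lean document; each statement's English description precedes it below -/
import Mathlib

section
/- Let T = S(d_1,…,d_k) be a spider that is not a caterpillar (i.e., at least three of the d_i are at least 2). Then the set S of all internal (non-leaf) vertices of T is a multicover of T, and |S| = Σ_{m=1}^{k} (d_m − 1) + 1. -/
variable {V : Type*}

/-- The eccentricity of a vertex: the maximum distance to any vertex. -/
noncomputable def ecc (G : SimpleGraph V) [Fintype V] (v : V) : ℕ :=
  Finset.univ.sup (fun u => G.dist u v)

/-- A broadcast on `G`: a function assigning each vertex a power at most its eccentricity. -/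
def IsBroadcast (G : SimpleGraph V) [Fintype V] (f : V → ℕ) : Prop :=
  ∀ v, f v ≤ ecc G v

/-- `u` hears the broadcasting vertex `v`. -/
def Hears (G : SimpleGraph V) (f : V → ℕ) (u v : V) : Prop :=
  0 < f v ∧ G.dist u v ≤ f v

/-- An independent broadcast: no broadcasting vertex hears another vertex. -/
def IsIndepBroadcast (G : SimpleGraph V) [Fintype V] (f : V → ℕ) : Prop :=
  IsBroadcast G f ∧ ∀ v w, 0 < f v → v ≠ w → ¬ Hears G f v w

/-- The broadcast independence number: the maximum weight of an independent broadcast. -/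
noncomputable def alphaB (G : SimpleGraph V) [Fintype V] : ℕ :=
  sSup {w | ∃ f, IsIndepBroadcast G f ∧ w = ∑ v, f v}

/-- A packing broadcast: every vertex hears at most one broadcasting vertex. -/
def IsPackingBroadcast (G : SimpleGraph V) [Fintype V] (f : V → ℕ) : Prop :=
  IsBroadcast G f ∧ ∀ u : V, {v | Hears G f u v}.Subsingleton

/-- The broadcast packing number: the maximum weight of a packing broadcast. -/
noncomputable def Pb (G : SimpleGraph V) [Fintype V] : ℕ :=
  sSup {w | ∃ f, IsPackingBroadcast G f ∧ w = ∑ v, f v}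

/-- A multicover: a set of vertices such that every ball of radius `r` (with
`1 ≤ r ≤ ecc v`) contains at least `r` of its elements. -/
def IsMulticover (G : SimpleGraph V) [Fintype V] (S : Finset V) : Prop :=
  ∀ v : V, ∀ r : ℕ, 1 ≤ r → r ≤ ecc G v → r ≤ (S.filter (fun u => G.dist u v ≤ r)).card

/-- The multicover number: the minimum cardinality of a multicover. -/
noncomputable def Mc (G : SimpleGraph V) [Fintype V] : ℕ :=
  sInf {n | ∃ S : Finset V, IsMulticover G S ∧ n = S.card}


/-- Vertices of the spider `S(d 0, …, d (k-1))`: `none` is the branch vertex `u`, and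
`some ⟨i, j⟩` is the vertex at distance `j + 1` from `u` on the `i`-th branch. -/
abbrev SpiderVert (k : ℕ) (d : Fin k → ℕ) : Type := Option (Σ i : Fin k, Fin (d i))

/-- The spider `S(d 0, …, d (k-1))`: the tree obtained from the star `K_{1,k}` with
center `u` by subdividing edges so that the `i`-th leaf is at distance `d i` from `u`. -/
def spider (k : ℕ) (d : Fin k → ℕ) : SimpleGraph (SpiderVert k d) where
  Adj x y :=
    match x, y with
    | none, none => False
    | none, some ⟨_, j⟩ => (j : ℕ) = 0
    | some ⟨_, j⟩, none => (j : ℕ) = 0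
    | some ⟨i, j⟩, some ⟨i', j'⟩ =>
        (i : ℕ) = (i' : ℕ) ∧ ((j : ℕ) + 1 = (j' : ℕ) ∨ (j' : ℕ) + 1 = (j : ℕ))
  symm := by
    constructor
    rintro (_ | ⟨i, j⟩) (_ | ⟨i', j'⟩) hxy <;> simp_all <;> omega
  loopless := by
    constructor
    rintro (_ | ⟨i, j⟩) hxy <;> simp_all

/-- The `i`-th leaf of the spider, at distance `d i` from the branch vertex. -/
def spiderLeaf (k : ℕ) (d : Fin k → ℕ) (hd : ∀ i, 1 ≤ d i) (i : Fin k) : SpiderVert k d :=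
  some ⟨i, ⟨d i - 1, by have := hd i; omega⟩⟩

/-- A leaf of the spider: the end vertex of a branch. -/
def IsSpiderLeaf (k : ℕ) (d : Fin k → ℕ) : SpiderVert k d → Prop
  | none => False
  | some ⟨i, j⟩ => (j : ℕ) + 1 = d i

instance (k : ℕ) (d : Fin k → ℕ) : DecidablePred (IsSpiderLeaf k d) := fun v =>
  match v with
  | none => isFalse id
  | some ⟨i, j⟩ => Nat.decEq ((j : ℕ) + 1) (d i)

/-!
Every vertex lies on the path from the leaf `l_a` of some branch `a` through the branch vertex to
the leaf `l_b` of a longest branch `b ≠ a`, and its eccentricity is its distance to one of the two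
ends of that path. The internal vertices of the path then give `r` internal vertices within
distance `r` for every admissible `r`, except when the vertex is `l_a` itself and `r = d_a + d_b`;
there the first vertex of a third branch of length at least `2`, which exists because the spider
is not a caterpillar, supplies the missing one. The internal vertices are the branch vertex and
the first `d_i - 1` vertices of each branch.
-/

lemma Finset.exists_mem_ne_ne_of_two_lt_card {α : Type*} [DecidableEq α] {s : Finset α}
    (hs : 2 < s.card) (a b : α) : ∃ c ∈ s, c ≠ a ∧ c ≠ b := by
  have : 0 < ((s.erase a).erase b).card :=
    lt_of_lt_of_le (by omega) (le_trans (Nat.sub_le_sub_right Finset.pred_card_le_card_erase 1)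
      Finset.pred_card_le_card_erase)
  obtain ⟨c, hc⟩ := Finset.card_pos.mp this
  simp only [Finset.mem_erase] at hc
  exact ⟨c, hc.2.2, hc.2.1, hc.1⟩

lemma exists_ne_forall_ne_le {ι α : Type*} [Fintype ι] [DecidableEq ι] [LinearOrder α]
    (f : ι → α) {a c : ι} (hca : c ≠ a) : ∃ b ≠ a, ∀ c' ≠ a, f c' ≤ f b := by
  obtain ⟨b, hb, hmax⟩ := (Finset.univ.erase a).exists_max_image f ⟨c, by simpa using hca⟩
  exact ⟨b, (Finset.mem_erase.mp hb).1, fun c' hc' => hmax c' (by simpa using hc')⟩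

section Spider

variable {k : ℕ} {d : Fin k → ℕ} {a b : Fin k}

-- The path from the `a`-th leaf (`s = 0`) through the branch vertex (`s = d a`) to the `b`-th
-- leaf (`s = d a + d b`); beyond `d a + d b` the value is junk.
def spiderLine (a b : Fin k) (s : ℕ) : SpiderVert k d :=
  if h : s < d a then some ⟨a, ⟨d a - 1 - s, by omega⟩⟩
  else if h' : d a < s ∧ s - d a - 1 < d b then some ⟨b, ⟨s - d a - 1, h'.2⟩⟩
  else none

lemma spiderLine_adj {s : ℕ} (hs : s < d a + d b) :
    (spider k d).Adj (spiderLine a b s) (spiderLine a b (s + 1)) := by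
  unfold spiderLine
  split_ifs <;> simp only [spider, true_and, SimpleGraph.irrefl] <;> omega

lemma exists_walk_spiderLine {s t : ℕ} (hst : s ≤ t) (ht : t ≤ d a + d b) :
    ∃ p : (spider k d).Walk (spiderLine a b s) (spiderLine a b t), p.length = t - s := by
  induction t, hst using Nat.le_induction with
  | base => exact ⟨.nil, by simp⟩
  | succ t hst ih =>
    obtain ⟨p, hp⟩ := ih (by omega)
    exact ⟨p.concat (spiderLine_adj (by omega)), by rw [SimpleGraph.Walk.length_concat, hp]; omega⟩

lemma dist_spiderLine_le {s t : ℕ} (hs : s ≤ d a + d b) (ht : t ≤ d a + d b) :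
    (spider k d).dist (spiderLine a b s) (spiderLine a b t) ≤ max (t - s) (s - t) := by
  rcases le_total s t with hst | hts
  · obtain ⟨p, hp⟩ := exists_walk_spiderLine (a := a) (b := b) hst ht
    exact (SimpleGraph.dist_le p).trans (hp ▸ le_max_left _ _)
  · obtain ⟨p, hp⟩ := exists_walk_spiderLine (a := a) (b := b) hts hs
    rw [SimpleGraph.dist_comm]
    exact (SimpleGraph.dist_le p).trans (hp ▸ le_max_right _ _)

lemma spiderLine_eq_of_le (c : Fin k) {s : ℕ} (hs : s ≤ d a) :
    spiderLine a b s = (spiderLine a c s : SpiderVert k d) := by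
  unfold spiderLine
  split_ifs <;> first | rfl | omega

lemma exists_spiderLine_eq (a : Fin k) (v : SpiderVert k d) :
    ∃ c t, spiderLine a c t = v ∧ t ≤ d a + d c ∧ (c = a → t ≤ d a) := by
  rcases v with _ | ⟨c, j⟩
  · exact ⟨a, d a, by simp [spiderLine], by omega, fun _ => le_rfl⟩
  · by_cases hca : c = a
    · subst hca
      refine ⟨c, d c - 1 - j, ?_, by omega, fun _ => by omega⟩
      have := j.2
      simp only [spiderLine, dif_pos (show d c - 1 - j < d c by omega)]
      congr; omega
    · refine ⟨c, d a + 1 + j, ?_, by omega, fun h => absurd h hca⟩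
      have := j.2
      simp only [spiderLine]
      rw [dif_neg (by omega), dif_pos (by omega)]
      congr; omega

lemma not_isSpiderLeaf_spiderLine {s : ℕ} (hs : 0 < s) (hs' : s < d a + d b) :
    ¬ IsSpiderLeaf k d (spiderLine a b s) := by
  unfold spiderLine
  split_ifs <;> simp only [IsSpiderLeaf, not_false_eq_true] <;> omega

lemma spiderLine_ne_some {c : Fin k} (hca : c ≠ a) (hcb : c ≠ b) (s : ℕ) (j : Fin (d c)) :
    spiderLine a b s ≠ some ⟨c, j⟩ := by
  unfold spiderLine
  split_ifs <;> simp [Ne.symm hca, Ne.symm hcb]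

def spiderPos (a : Fin k) : SpiderVert k d → ℕ
  | none => d a
  | some ⟨i, j⟩ => if i = a then d a - 1 - j else d a + 1 + j

lemma spiderPos_spiderLine (hab : a ≠ b) {s : ℕ} (hs : s ≤ d a + d b) :
    spiderPos a (spiderLine a b s : SpiderVert k d) = s := by
  unfold spiderLine
  split_ifs <;> simp only [spiderPos, Ne.symm hab, ↓reduceIte] <;> omega

lemma injOn_spiderLine (hab : a ≠ b) :
    Set.InjOn (spiderLine a b : ℕ → SpiderVert k d) (Set.Iic (d a + d b)) :=
  fun s hs t ht hst => by rw [← spiderPos_spiderLine hab hs, hst, spiderPos_spiderLine hab ht]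

lemma ecc_spiderLine_le (hb : ∀ c ≠ a, d c ≤ d b) {q : ℕ} (hq : q ≤ d a) :
    ecc (spider k d) (spiderLine a b q) ≤ max q (d a + d b - q) := by
  refine Finset.sup_le fun w _ => ?_
  obtain ⟨c, t, rfl, ht, hca⟩ := exists_spiderLine_eq a w
  have htb : t ≤ d a + d b := by
    by_cases h : c = a
    · have := hca h; omega
    · have := hb c h; omega
  rw [spiderLine_eq_of_le c hq]
  exact (dist_spiderLine_le ht (by omega)).trans (by omega)

lemma image_Icc_subset_ball {q : ℕ} (hq : q ≤ d a + d b) (r : ℕ) :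
    (Finset.Icc (max (q - r) 1) (min (q + r) (d a + d b - 1))).image (spiderLine a b) ⊆
      (Finset.univ.filter (fun v => ¬ IsSpiderLeaf k d v)).filter
        (fun u => (spider k d).dist u (spiderLine a b q) ≤ r) := by
  intro v hv
  obtain ⟨s, hs, rfl⟩ := Finset.mem_image.mp hv
  rw [Finset.mem_Icc] at hs
  simp only [Finset.mem_filter, Finset.mem_univ, true_and]
  exact ⟨not_isSpiderLeaf_spiderLine (by omega) (by omega),
    (dist_spiderLine_le (by omega) hq).trans (by omega)⟩

lemma le_card_ball_spiderLine (hab : a ≠ b) {q : ℕ} (hq : q ≤ d a + d b) (r : ℕ) :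
    min (q + r) (d a + d b - 1) + 1 - max (q - r) 1 ≤
      ((Finset.univ.filter (fun v => ¬ IsSpiderLeaf k d v)).filter
        (fun u => (spider k d).dist u (spiderLine a b q) ≤ r)).card := by
  refine le_of_eq_of_le ?_ (Finset.card_le_card (image_Icc_subset_ball hq r))
  rw [Finset.card_image_of_injOn, Nat.card_Icc]
  exact (injOn_spiderLine hab).mono fun s hs => by
    simp only [Finset.coe_Icc, Set.mem_Icc, Set.mem_Iic] at hs ⊢; omega

lemma le_card_ball_spiderLine_zero (hab : a ≠ b) {c : Fin k} (hca : c ≠ a) (hcb : c ≠ b)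
    (hc : 2 ≤ d c) {r : ℕ} (hr : d a + 1 ≤ r) :
    min r (d a + d b - 1) + 1 ≤
      ((Finset.univ.filter (fun v => ¬ IsSpiderLeaf k d v)).filter
        (fun u => (spider k d).dist u (spiderLine a b 0) ≤ r)).card := by
  set x : SpiderVert k d := some ⟨c, ⟨0, by omega⟩⟩
  have hx : x = spiderLine a c (d a + 1) := by
    simp only [x, spiderLine]
    rw [dif_neg (by omega), dif_pos (by omega)]
    simp
  set T := (Finset.Icc (max (0 - r) 1) (min (0 + r) (d a + d b - 1))).image (spiderLine a b)
  have hxT : x ∉ T := by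
    simp only [T, Finset.mem_image, not_exists, not_and]
    exact fun s _ => spiderLine_ne_some hca hcb s _
  have hsub : insert x T ⊆ (Finset.univ.filter (fun v => ¬ IsSpiderLeaf k d v)).filter
      (fun u => (spider k d).dist u (spiderLine a b 0) ≤ r) := by
    refine Finset.insert_subset ?_ (image_Icc_subset_ball (by omega) r)
    simp only [Finset.mem_filter, Finset.mem_univ, true_and]
    refine ⟨fun h => ?_, ?_⟩
    · have : 0 + 1 = d c := h
      omega
    · rw [hx, spiderLine_eq_of_le c (Nat.zero_le _), SimpleGraph.dist_comm]
      exact (dist_spiderLine_le (by omega) (by omega)).trans (by omega)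
  refine le_trans ?_ (Finset.card_le_card hsub)
  rw [Finset.card_insert_of_notMem hxT, Finset.card_image_of_injOn, Nat.card_Icc]
  · omega
  · exact (injOn_spiderLine hab).mono fun s hs => by
      simp only [Finset.coe_Icc, Set.mem_Icc, Set.mem_Iic] at hs ⊢; omega

lemma exists_forall_spiderLine_eq (a₀ : Fin k) (v : SpiderVert k d) :
    ∃ a q, q ≤ d a ∧ ∀ b, spiderLine a b q = v := by
  rcases v with _ | ⟨a, j⟩
  · exact ⟨a₀, d a₀, le_rfl, fun b => by simp [spiderLine]⟩
  · have := j.2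
    refine ⟨a, d a - 1 - j, by omega, fun b => ?_⟩
    simp only [spiderLine, dif_pos (show d a - 1 - j < d a by omega)]
    congr; omega

lemma le_card_ball_of_le_ecc (hab : a ≠ b) (hb : ∀ c ≠ a, d c ≤ d b) {c : Fin k}
    (hca : c ≠ a) (hcb : c ≠ b) (hc : 2 ≤ d c) {q r : ℕ} (hq : q ≤ d a) (hr1 : 1 ≤ r)
    (hr : r ≤ ecc (spider k d) (spiderLine a b q)) :
    r ≤ ((Finset.univ.filter (fun v => ¬ IsSpiderLeaf k d v)).filter
        (fun u => (spider k d).dist u (spiderLine a b q) ≤ r)).card := by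
  have hecc := ecc_spiderLine_le hb hq
  have hdb := hc.trans (hb c hca)
  rcases Nat.eq_zero_or_pos q with rfl | hq0
  · by_cases hr' : d a + 1 ≤ r
    · exact le_trans (by omega) (le_card_ball_spiderLine_zero hab hca hcb hc hr')
    · exact le_trans (by omega) (le_card_ball_spiderLine hab (by omega) r)
  · exact le_trans (by omega) (le_card_ball_spiderLine hab (by omega) r)

lemma card_filter_not_isSpiderLeaf :
    (Finset.univ.filter (fun v : SpiderVert k d => ¬ IsSpiderLeaf k d v)).card =
      (∑ m : Fin k, (d m - 1)) + 1 := by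
  let f : Option (Σ i : Fin k, Fin (d i - 1)) → SpiderVert k d :=
    Option.map fun x => ⟨x.1, Fin.castLE (Nat.sub_le _ 1) x.2⟩
  have hf : Function.Injective f := by
    refine Option.map_injective fun ⟨i, j⟩ ⟨i', j'⟩ h => ?_
    simp only [Sigma.mk.injEq] at h
    obtain ⟨rfl, h⟩ := h
    simp only [heq_eq_eq, Fin.castLE_inj] at h
    rw [h]
  have himage : Finset.univ.image f = Finset.univ.filter (fun v => ¬ IsSpiderLeaf k d v) := by
    ext v
    simp only [Finset.mem_image, Finset.mem_univ, true_and, Finset.mem_filter]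
    constructor
    · rintro ⟨_ | ⟨i, j⟩, rfl⟩
      · exact id
      · have := j.2
        simp only [f, Option.map_some, IsSpiderLeaf, Fin.val_castLE]
        omega
    · rcases v with _ | ⟨i, j⟩
      · exact fun _ => ⟨none, rfl⟩
      · intro h
        have : (j : ℕ) + 1 ≠ d i := h
        exact ⟨some ⟨i, ⟨j, by omega⟩⟩, rfl⟩
  rw [← himage, Finset.card_image_of_injective _ hf]
  simp

end Spider

theorem stmt16_general (k : ℕ) (d : Fin k → ℕ)
    (hnc : 3 ≤ (Finset.univ.filter (fun i : Fin k => 2 ≤ d i)).card) :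
    IsMulticover (spider k d) (Finset.univ.filter (fun v => ¬ IsSpiderLeaf k d v)) ∧
    (Finset.univ.filter (fun v : SpiderVert k d => ¬ IsSpiderLeaf k d v)).card =
      (∑ m : Fin k, (d m - 1)) + 1 := by
  refine ⟨fun v r hr1 hr => ?_, card_filter_not_isSpiderLeaf⟩
  obtain ⟨a₀, -⟩ := Finset.card_pos.mp (by omega : 0 < (Finset.univ.filter (2 ≤ d ·)).card)
  obtain ⟨a, q, hq, hv⟩ := exists_forall_spiderLine_eq a₀ v
  obtain ⟨c₀, -, hc₀a, -⟩ := Finset.exists_mem_ne_ne_of_two_lt_card hnc a a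
  obtain ⟨b, hba, hb⟩ := exists_ne_forall_ne_le d hc₀a
  obtain ⟨c, hc, hca, hcb⟩ := Finset.exists_mem_ne_ne_of_two_lt_card hnc a b
  rw [← hv b] at hr ⊢
  exact le_card_ball_of_le_ecc hba.symm hb hca hcb (Finset.mem_filter.mp hc).2 hq hr1 hr

/-- for a spider that is not a caterpillar (at least three branches of
length at least `2`), the set of all internal (non-leaf) vertices is a multicover, and
its cardinality is `Σ_m (d_m - 1) + 1`. -/
theorem stmt16 (k : ℕ) (hk : 3 ≤ k) (d : Fin k → ℕ) (hd : ∀ i, 1 ≤ d i)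
    (hmono : Monotone d)
    (hnc : 3 ≤ (Finset.univ.filter (fun i : Fin k => 2 ≤ d i)).card) :
    IsMulticover (spider k d) (Finset.univ.filter (fun v => ¬ IsSpiderLeaf k d v)) ∧
    (Finset.univ.filter (fun v : SpiderVert k d => ¬ IsSpiderLeaf k d v)).card =
      (∑ m : Fin k, (d m - 1)) + 1 :=
  stmt16_general k d hnc
end

section
/- Let T = S(d_1,…,d_k) be a spider that is not a caterpillar (i.e., at least three of the d_i are at least 2). Then P_b(T) = M_c(T) = Σ_{m=1}^{k} (d_m − 1) + 1. -/
variable {V : Type*}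

/-! A packing broadcast weighs at most as much as any multicover: the balls of the broadcasting
vertices are pairwise disjoint, and a ball of radius `r` contains at least `r` vertices of the
multicover. So it suffices to exhibit a packing broadcast and a multicover of the same size
`∑ (d i - 1) + 1`.

Broadcast: every leaf broadcasts with strength `d i - 1`, except the leaf of one branch `i₀` of
length at least two, which uses `d i₀`; it is heard on its own branch and at the branch vertex,
every other leaf only on its own branch.

Multicover: all non-leaves. If `1 ≤ r ≤ ecc v`, each distance `1, …, r - 1` from `v` is attained
by a non-leaf, and so is `0` unless `v` is a leaf. A ball that reaches beyond the branch vertex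
contains the first vertex of at least two long branches other than that of `v`, all at the same
distance from `v`, which makes up for the sphere of radius `r`, possibly made of leaves only.

Distances in the spider are computed exactly: walks along the branches give upper bounds, and a
signed height that changes by at most one along every edge gives the lower bounds. -/

open SimpleGraph Finset

namespace SimpleGraph

variable {G : SimpleGraph V}

theorem exists_walk_of_adj_succ (p : ℕ → V) (a : ℕ) :
    ∀ n, (∀ t < n, G.Adj (p (a + t)) (p (a + t + 1))) →
      ∃ w : G.Walk (p a) (p (a + n)), w.length = n
  | 0, _ => ⟨Walk.nil, rfl⟩
  | n + 1, hp => by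
    obtain ⟨w, hw⟩ := exists_walk_of_adj_succ p a n fun t ht => hp t (by omega)
    exact ⟨w.concat (hp n (by omega)), by simp [hw]⟩

theorem Walk.sub_le_length (φ : V → ℤ) (hφ : ∀ a b, G.Adj a b → φ a ≤ φ b + 1) {x y : V}
    (w : G.Walk x y) : φ x - φ y ≤ w.length := by
  induction w with
  | nil => simp
  | cons hab _ ih => have := hφ _ _ hab; push_cast [Walk.length_cons]; omega

theorem Reachable.sub_le_dist (φ : V → ℤ) (hφ : ∀ a b, G.Adj a b → φ a ≤ φ b + 1) {x y : V}
    (h : G.Reachable x y) : φ x - φ y ≤ G.dist x y := by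
  obtain ⟨w, hw⟩ := h.exists_walk_length_eq_dist
  exact hw ▸ w.sub_le_length φ hφ

theorem sum_card_filter_dist_eq_le {S : Finset V} {v : V} {r : ℕ} {A : Finset ℕ}
    (hA : ∀ s ∈ A, s ≤ r) :
    ∑ s ∈ A, (S.filter (G.dist · v = s)).card ≤ (S.filter (G.dist · v ≤ r)).card := by
  classical
  rw [← card_biUnion fun s _ t _ hst => disjoint_filter.2 fun u _ hs ht => hst (hs.symm.trans ht)]
  refine card_le_card fun u hu => ?_
  obtain ⟨s, hs, hu⟩ := mem_biUnion.1 hu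
  rw [mem_filter] at hu ⊢
  exact ⟨hu.1, hu.2.trans_le (hA s hs)⟩

theorem one_le_card_filter_dist_eq {S : Finset V} {v : V} {s : ℕ}
    (h : ∃ x ∈ S, G.dist x v = s) : 1 ≤ (S.filter (G.dist · v = s)).card :=
  card_pos.2 (filter_nonempty_iff.2 h)

theorem le_card_filter_dist_le {S : Finset V} {v : V} {r : ℕ} {A : Finset ℕ} (hAr : r ≤ A.card)
    (hA : ∀ s ∈ A, s ≤ r ∧ ∃ x ∈ S, G.dist x v = s) :
    r ≤ (S.filter (G.dist · v ≤ r)).card := by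
  refine le_trans ?_ (sum_card_filter_dist_eq_le fun s hs => (hA s hs).1)
  have := card_nsmul_le_sum A _ 1 fun s hs => one_le_card_filter_dist_eq (hA s hs).2
  rw [smul_eq_mul, mul_one] at this
  omega

theorem le_card_filter_dist_le_of_two_le {S : Finset V} {v : V} {r s₀ : ℕ} {A : Finset ℕ}
    (hAr : r ≤ A.card + 1) (hs₀ : s₀ ∈ A) (h₀ : 2 ≤ (S.filter (G.dist · v = s₀)).card)
    (hA : ∀ s ∈ A, s ≤ r ∧ ∃ x ∈ S, G.dist x v = s) :
    r ≤ (S.filter (G.dist · v ≤ r)).card := by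
  refine le_trans ?_ (sum_card_filter_dist_eq_le fun s hs => (hA s hs).1)
  rw [← add_sum_erase A _ hs₀]
  have := card_nsmul_le_sum (A.erase s₀) _ 1 fun s hs =>
    one_le_card_filter_dist_eq (hA s (mem_of_mem_erase hs)).2
  rw [card_erase_of_mem hs₀, smul_eq_mul, mul_one] at this
  omega

end SimpleGraph

section Broadcast

variable [Fintype V] {G : SimpleGraph V}

theorem dist_le_ecc (u v : V) : G.dist u v ≤ ecc G v :=
  le_sup (f := fun u => G.dist u v) (mem_univ u)

theorem exists_le_dist_of_le_ecc {v : V} {r : ℕ} (hr : 0 < r) (h : r ≤ ecc G v) :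
    ∃ u, r ≤ G.dist u v := by
  simpa using (Finset.le_sup_iff hr).1 h

theorem IsPackingBroadcast.sum_le_card {f : V → ℕ} {S : Finset V}
    (hf : IsPackingBroadcast G f) (hS : IsMulticover G S) : ∑ v, f v ≤ S.card := by
  classical
  set T := univ.filter (0 < f ·)
  let ball (v : V) := S.filter (G.dist · v ≤ f v)
  have hdisj : (T : Set V).PairwiseDisjoint ball := fun v hv w hw hvw =>
    disjoint_left.2 fun u hu hu' => hvw <| hf.2 u
      ⟨(mem_filter.1 (mem_coe.1 hv)).2, (mem_filter.1 hu).2⟩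
      ⟨(mem_filter.1 (mem_coe.1 hw)).2, (mem_filter.1 hu').2⟩
  calc ∑ v, f v = ∑ v ∈ T, f v := (sum_filter_of_ne fun v _ h => Nat.pos_of_ne_zero h).symm
    _ ≤ ∑ v ∈ T, (ball v).card :=
        sum_le_sum fun v hv => hS v (f v) (mem_filter.1 hv).2 (hf.1 v)
    _ = (T.biUnion ball).card := (card_biUnion hdisj).symm
    _ ≤ S.card := card_le_card (biUnion_subset.2 fun v _ => filter_subset _ _)

theorem pb_eq_card_and_mc_eq_card {f : V → ℕ} {S : Finset V} (hf : IsPackingBroadcast G f)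
    (hS : IsMulticover G S) (h : ∑ v, f v = S.card) : Pb G = S.card ∧ Mc G = S.card := by
  constructor
  · refine IsGreatest.csSup_eq ⟨⟨f, hf, h.symm⟩, ?_⟩
    rintro _ ⟨f', hf', rfl⟩
    exact hf'.sum_le_card hS
  · refine IsLeast.csInf_eq ⟨⟨S, hS, rfl⟩, ?_⟩
    rintro _ ⟨S', hS', rfl⟩
    exact h ▸ hf.sum_le_card hS'

end Broadcast

theorem Fin.sum_ite_val_add_one_eq {M : Type*} [AddCommMonoid M] (n : ℕ) (a b : M) :
    ∑ j : Fin n, (if (j : ℕ) + 1 = n then a else b) = if n = 0 then 0 else a + (n - 1) • b := by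
  rcases n with _ | n
  · simp
  · rw [Fin.sum_univ_castSucc, sum_congr rfl fun j _ => if_neg (by simp [(Fin.is_lt j).ne])]
    simp [add_comm]

section Spider

variable {k : ℕ} {d : Fin k → ℕ}

/-- Branch `i` listed by distance from the branch vertex; heights above `d i` are junk. -/
def spiderRay (i : Fin k) : ℕ → SpiderVert k d
  | 0 => none
  | t + 1 => if ht : t < d i then some ⟨i, ⟨t, ht⟩⟩ else none

theorem spiderRay_zero (i : Fin k) : spiderRay (d := d) i 0 = none := rfl

theorem spiderRay_succ (i : Fin k) (j : Fin (d i)) : spiderRay i (j + 1) = some ⟨i, j⟩ := by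
  simp [spiderRay]

theorem spiderRay_adj (i : Fin k) {t : ℕ} (ht : t < d i) :
    (spider k d).Adj (spiderRay i t) (spiderRay i (t + 1)) := by
  rcases t with _ | t
  · simp [spiderRay, ht, spider]
  · simp [spiderRay, ht, Nat.lt_of_succ_lt ht, spider]

theorem spiderRay_reachable_and_dist_le (i : Fin k) {a b : ℕ} (hab : a ≤ b) (hb : b ≤ d i) :
    (spider k d).Reachable (spiderRay i a) (spiderRay i b) ∧
      (spider k d).dist (spiderRay i a) (spiderRay i b) ≤ b - a := by
  obtain ⟨n, rfl⟩ := Nat.exists_eq_add_of_le hab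
  obtain ⟨w, hw⟩ := exists_walk_of_adj_succ (spiderRay (d := d) i) a n fun t ht =>
    spiderRay_adj i (by omega)
  exact ⟨⟨w⟩, (dist_le w).trans (by omega)⟩

theorem spider_connected : (spider k d).Connected := by
  have hnone : ∀ x, (spider k d).Reachable none x := by
    rintro (_ | ⟨i, j⟩)
    · rfl
    · simpa [spiderRay_zero, spiderRay_succ] using
        (spiderRay_reachable_and_dist_le i (Nat.zero_le (j + 1)) j.2).1
  exact ⟨fun x y => (hnone x).symm.trans (hnone y)⟩

def spiderPotential (i : Fin k) : SpiderVert k d → ℤ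
  | none => 0
  | some ⟨m, j⟩ => if m = i then j + 1 else -(j + 1)

theorem spiderPotential_le_add_one (i : Fin k) (a b : SpiderVert k d)
    (h : (spider k d).Adj a b) : spiderPotential i a ≤ spiderPotential i b + 1 := by
  rcases a with _ | ⟨m, j⟩ <;> rcases b with _ | ⟨m', j'⟩
  · exact h.elim
  all_goals simp only [spider] at h
  · simp only [spiderPotential]; split_ifs <;> omega
  · simp only [spiderPotential]; split_ifs <;> omega
  · obtain ⟨hm, hj⟩ := h
    obtain rfl : m = m' := Fin.ext hm
    simp only [spiderPotential]; split_ifs <;> omega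

theorem spiderPotential_sub_le_dist (i : Fin k) (x y : SpiderVert k d) :
    spiderPotential i x - spiderPotential i y ≤ (spider k d).dist x y :=
  (spider_connected x y).sub_le_dist _ (spiderPotential_le_add_one i)

theorem spider_dist_none_some (i : Fin k) (j : Fin (d i)) :
    (spider k d).dist none (some ⟨i, j⟩) = j + 1 := by
  refine le_antisymm ?_ ?_
  · simpa [spiderRay_zero, spiderRay_succ] using
      (spiderRay_reachable_and_dist_le i (Nat.zero_le (j + 1)) j.2).2
  · have := spiderPotential_sub_le_dist i (some ⟨i, j⟩) none
    rw [SimpleGraph.dist_comm] at this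
    simp only [spiderPotential, if_true] at this
    omega

theorem spider_dist_some_some_self (i : Fin k) (j j' : Fin (d i)) :
    (spider k d).dist (some ⟨i, j⟩) (some ⟨i, j'⟩) = Nat.dist j j' := by
  wlog h : j ≤ j' generalizing j j'
  · rw [SimpleGraph.dist_comm, Nat.dist_comm]
    exact this j' j (le_of_not_ge h)
  refine le_antisymm ?_ ?_
  · simpa [spiderRay_succ, Nat.dist, Nat.sub_eq_zero_of_le (Fin.le_def.1 h)] using
      (spiderRay_reachable_and_dist_le i (Nat.succ_le_succ (Fin.le_def.1 h)) j'.2).2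
  · have := spiderPotential_sub_le_dist i (some ⟨i, j'⟩) (some ⟨i, j⟩)
    rw [SimpleGraph.dist_comm] at this
    simp only [spiderPotential, if_true] at this
    simp only [Nat.dist]
    omega

theorem spider_dist_some_some_of_ne {i m : Fin k} (h : i ≠ m) (j : Fin (d i)) (q : Fin (d m)) :
    (spider k d).dist (some ⟨i, j⟩) (some ⟨m, q⟩) = j + q + 2 := by
  refine le_antisymm ?_ ?_
  · calc (spider k d).dist (some ⟨i, j⟩) (some ⟨m, q⟩)
        _ ≤ (spider k d).dist (some ⟨i, j⟩) none + (spider k d).dist none (some ⟨m, q⟩) :=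
          spider_connected.dist_triangle
        _ = j + q + 2 := by
          rw [SimpleGraph.dist_comm, spider_dist_none_some, spider_dist_none_some]; omega
  · have := spiderPotential_sub_le_dist i (some ⟨i, j⟩) (some ⟨m, q⟩)
    simp only [spiderPotential, if_true, if_neg h.symm] at this
    omega

theorem spider_exists_le_of_le_ecc_none {r : ℕ} (hr : 0 < r)
    (h : r ≤ ecc (spider k d) none) : ∃ m, r ≤ d m := by
  obtain ⟨u, hu⟩ := exists_le_dist_of_le_ecc hr h
  rcases u with _ | ⟨m, q⟩
  · rw [dist_self] at hu
    omega
  · rw [SimpleGraph.dist_comm, spider_dist_none_some] at hu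
    exact ⟨m, hu.trans q.2⟩

theorem spider_exists_le_of_le_ecc_some {i : Fin k} {j : Fin (d i)} {r : ℕ} (hr : j + 1 < r)
    (h : r ≤ ecc (spider k d) (some ⟨i, j⟩)) : (∃ m ≠ i, r ≤ j + 1 + d m) ∨ j + r < d i := by
  obtain ⟨u, hu⟩ := exists_le_dist_of_le_ecc (by omega) h
  rcases u with _ | ⟨m, q⟩
  · rw [spider_dist_none_some] at hu
    omega
  · by_cases hm : m = i
    · subst hm
      rw [spider_dist_some_some_self] at hu
      simp only [Nat.dist] at hu
      omega
    · rw [spider_dist_some_some_of_ne hm] at hu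
      exact Or.inl ⟨m, hm, by omega⟩

def leafBroadcast (i₀ : Fin k) : SpiderVert k d → ℕ
  | none => 0
  | some ⟨i, j⟩ => if (j : ℕ) + 1 = d i then d i - 1 + (if i = i₀ then 1 else 0) else 0

theorem sum_leafBroadcast {i₀ : Fin k} (h : 0 < d i₀) :
    ∑ x, leafBroadcast (d := d) i₀ x = ∑ i, (d i - 1) + 1 := by
  rw [Fintype.sum_option, ← univ_sigma_univ, sum_sigma]
  simp only [leafBroadcast, Fin.sum_ite_val_add_one_eq, smul_zero, add_zero, zero_add]
  have hterm (i : Fin k) : (if d i = 0 then 0 else d i - 1 + if i = i₀ then 1 else 0) =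
      d i - 1 + if i = i₀ then 1 else 0 := by
    split_ifs with h0 hi <;> subst_vars <;> omega
  simp [hterm, sum_add_distrib]

theorem mem_branch_of_hears_leafBroadcast {i₀ : Fin k} {u : SpiderVert k d} {a : Fin k}
    {j : Fin (d a)} (h : Hears (spider k d) (leafBroadcast i₀) u (some ⟨a, j⟩)) :
    (j : ℕ) + 1 = d a ∧ (u = none ∧ a = i₀ ∨ ∃ q, u = some ⟨a, q⟩) := by
  obtain ⟨hpos, hdist⟩ := h
  have hleaf : (j : ℕ) + 1 = d a := by
    by_contra hj
    simp [leafBroadcast, hj] at hpos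
  simp only [leafBroadcast, if_pos hleaf] at hdist
  refine ⟨hleaf, ?_⟩
  rcases u with _ | ⟨c, q⟩
  · rw [spider_dist_none_some] at hdist
    refine Or.inl ⟨rfl, ?_⟩
    by_contra hne
    rw [if_neg hne] at hdist
    omega
  · by_cases hc : c = a
    · subst hc
      exact Or.inr ⟨q, rfl⟩
    · rw [spider_dist_some_some_of_ne hc] at hdist
      split_ifs at hdist <;> omega

theorem leafBroadcast_isPackingBroadcast (i₀ : Fin k) :
    IsPackingBroadcast (spider k d) (leafBroadcast i₀) := by
  refine ⟨fun v => ?_, fun u v hv w hw => ?_⟩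
  · rcases v with _ | ⟨i, j⟩
    · exact Nat.zero_le _
    · calc leafBroadcast i₀ (some ⟨i, j⟩) ≤ j + 1 := by
            simp only [leafBroadcast]; split_ifs <;> omega
        _ = (spider k d).dist none (some ⟨i, j⟩) := (spider_dist_none_some i j).symm
        _ ≤ ecc (spider k d) (some ⟨i, j⟩) := dist_le_ecc _ _
  · rcases v with _ | ⟨a, j⟩
    · exact absurd hv.1 (lt_irrefl 0)
    rcases w with _ | ⟨b, j'⟩
    · exact absurd hw.1 (lt_irrefl 0)
    obtain ⟨hj, hu⟩ := mem_branch_of_hears_leafBroadcast hv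
    obtain ⟨hj', hu'⟩ := mem_branch_of_hears_leafBroadcast hw
    obtain rfl : a = b := by
      rcases hu with ⟨rfl, rfl⟩ | ⟨q, rfl⟩ <;> rcases hu' with ⟨h, rfl⟩ | ⟨q', h⟩ <;> simp_all
    obtain rfl : j = j' := Fin.ext (by omega)
    rfl

instance : DecidablePred (IsSpiderLeaf k d)
  | none => inferInstanceAs (Decidable False)
  | some ⟨i, j⟩ => inferInstanceAs (Decidable ((j : ℕ) + 1 = d i))

theorem isSpiderLeaf_none : ¬IsSpiderLeaf k d none := id

theorem isSpiderLeaf_some {i : Fin k} {j : Fin (d i)} :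
    IsSpiderLeaf k d (some ⟨i, j⟩) ↔ (j : ℕ) + 1 = d i := Iff.rfl

def spiderNonleaves (k : ℕ) (d : Fin k → ℕ) : Finset (SpiderVert k d) :=
  univ.filter fun x => ¬IsSpiderLeaf k d x

theorem card_spiderNonleaves : (spiderNonleaves k d).card = ∑ i, (d i - 1) + 1 := by
  rw [spiderNonleaves, card_filter, Fintype.sum_option, ← univ_sigma_univ, sum_sigma]
  simp only [isSpiderLeaf_none, isSpiderLeaf_some, ite_not, Fin.sum_ite_val_add_one_eq,
    if_false, zero_add, smul_eq_mul, mul_one]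
  rw [add_comm]
  congr 1
  exact sum_congr rfl fun i _ => by split_ifs <;> omega

theorem none_mem_spiderNonleaves : none ∈ spiderNonleaves k d :=
  mem_filter.2 ⟨mem_univ _, isSpiderLeaf_none⟩

theorem some_mem_spiderNonleaves {i : Fin k} {j : ℕ} (hj : j + 1 < d i) :
    some ⟨i, ⟨j, by omega⟩⟩ ∈ spiderNonleaves k d :=
  mem_filter.2 ⟨mem_univ _, hj.ne⟩

theorem exists_mem_spiderNonleaves_dist_none_eq {m : Fin k} {s : ℕ} (hs : s < d m) :
    ∃ x ∈ spiderNonleaves k d, (spider k d).dist x none = s := by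
  rcases s with _ | s
  · exact ⟨none, none_mem_spiderNonleaves, dist_self⟩
  · refine ⟨some ⟨m, ⟨s, by omega⟩⟩, some_mem_spiderNonleaves hs, ?_⟩
    rw [SimpleGraph.dist_comm, spider_dist_none_some]

theorem exists_mem_spiderNonleaves_dist_eq {i : Fin k} (j : Fin (d i)) {s : ℕ}
    (hs : 0 < s ∧ s ≤ j + 1 ∨ (∃ m ≠ i, j + 1 < s ∧ s ≤ j + d m) ∨ j + s + 1 < d i) :
    ∃ x ∈ spiderNonleaves k d, (spider k d).dist x (some ⟨i, j⟩) = s := by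
  rcases hs with ⟨hs0, hs⟩ | ⟨m, hm, hs1, hs2⟩ | hs
  · by_cases hsj : s = j + 1
    · exact ⟨none, none_mem_spiderNonleaves, by rw [spider_dist_none_some, hsj]⟩
    · refine ⟨some ⟨i, ⟨j - s, by omega⟩⟩, some_mem_spiderNonleaves (by omega), ?_⟩
      rw [spider_dist_some_some_self]
      simp only [Nat.dist]
      omega
  · refine ⟨some ⟨m, ⟨s - j - 2, by omega⟩⟩, some_mem_spiderNonleaves (by omega), ?_⟩
    rw [spider_dist_some_some_of_ne hm, Fin.val_mk]
    omega
  · refine ⟨some ⟨i, ⟨j + s, by omega⟩⟩, some_mem_spiderNonleaves hs, ?_⟩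
    rw [spider_dist_some_some_self]
    simp only [Nat.dist]
    omega

theorem two_le_card_spiderNonleaves_dist_eq (hnc : 3 ≤ (univ.filter (2 ≤ d ·)).card)
    (i : Fin k) (j : Fin (d i)) :
    2 ≤ ((spiderNonleaves k d).filter ((spider k d).dist · (some ⟨i, j⟩) = j + 2)).card := by
  obtain ⟨m₁, h₁, m₂, h₂, hne⟩ := one_lt_card.1 <|
    (show 1 < (univ.filter (2 ≤ d ·)).card - 1 by omega).trans_le (pred_card_le_card_erase (a := i))
  simp only [mem_erase, mem_filter, mem_univ, true_and] at h₁ h₂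
  have hx (m : Fin k) (hm : m ≠ i ∧ 2 ≤ d m) :
      some ⟨m, ⟨0, by omega⟩⟩ ∈
        (spiderNonleaves k d).filter ((spider k d).dist · (some ⟨i, j⟩) = j + 2) :=
    mem_filter.2 ⟨some_mem_spiderNonleaves (by omega), by
      rw [spider_dist_some_some_of_ne hm.1]; simp⟩
  calc 2 = ({some ⟨m₁, ⟨0, by omega⟩⟩, some ⟨m₂, ⟨0, by omega⟩⟩} : Finset (SpiderVert k d)).card :=
        (card_pair (by simp [hne])).symm
    _ ≤ _ := card_le_card (insert_subset (hx m₁ h₁) (singleton_subset_iff.2 (hx m₂ h₂)))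

theorem le_card_spiderNonleaves_dist_none_le {r : ℕ} (hr : 0 < r)
    (hecc : r ≤ ecc (spider k d) none) :
    r ≤ ((spiderNonleaves k d).filter ((spider k d).dist · none ≤ r)).card := by
  obtain ⟨m, hm⟩ := spider_exists_le_of_le_ecc_none hr hecc
  refine le_card_filter_dist_le (A := range r) (by simp) fun s hs => ?_
  rw [mem_range] at hs
  exact ⟨hs.le, exists_mem_spiderNonleaves_dist_none_eq (m := m) (by omega)⟩

theorem le_card_spiderNonleaves_dist_some_le
    (hnc : 3 ≤ (univ.filter (2 ≤ d ·)).card) {i m : Fin k} (hm : m ≠ i) {j : Fin (d i)}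
    {r : ℕ} (hrj : j + 2 ≤ r) (hrm : r ≤ j + 1 + d m) :
    r ≤ ((spiderNonleaves k d).filter ((spider k d).dist · (some ⟨i, j⟩) ≤ r)).card := by
  refine le_card_filter_dist_le_of_two_le (A := insert ((j : ℕ) + 2) (Icc 1 (r - 1)))
    ?_ (mem_insert_self _ _) (two_le_card_spiderNonleaves_dist_eq hnc i j) fun s hs => ?_
  · have := card_le_card (subset_insert ((j : ℕ) + 2) (Icc 1 (r - 1)))
    rw [Nat.card_Icc] at this
    omega
  rcases mem_insert.1 hs with rfl | hs
  · exact ⟨hrj, filter_nonempty_iff.1 (card_pos.1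
      (by have := two_le_card_spiderNonleaves_dist_eq hnc i j; omega))⟩
  rw [mem_Icc] at hs
  refine ⟨by omega, exists_mem_spiderNonleaves_dist_eq j ?_⟩
  by_cases hsj : s ≤ j + 1
  · exact Or.inl ⟨by omega, hsj⟩
  · exact Or.inr (Or.inl ⟨m, hm, by omega, by omega⟩)

theorem spiderNonleaves_isMulticover (hnc : 3 ≤ (univ.filter (2 ≤ d ·)).card) :
    IsMulticover (spider k d) (spiderNonleaves k d) := by
  rintro (_ | ⟨i, j⟩) r hr hecc
  · exact le_card_spiderNonleaves_dist_none_le hr hecc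
  by_cases hrj : r ≤ j + 1
  · refine le_card_filter_dist_le (A := Icc 1 r) (by simp) fun s hs => ?_
    rw [mem_Icc] at hs
    exact ⟨hs.2, exists_mem_spiderNonleaves_dist_eq j (Or.inl ⟨by omega, by omega⟩)⟩
  rcases spider_exists_le_of_le_ecc_some (by omega) hecc with ⟨m, hm, hrm⟩ | hup
  · exact le_card_spiderNonleaves_dist_some_le hnc hm (by omega) hrm
  · refine le_card_filter_dist_le (A := range r) (by simp) fun s hs => ?_
    rw [mem_range] at hs
    exact ⟨hs.le, exists_mem_spiderNonleaves_dist_eq j (Or.inr (Or.inr (by omega)))⟩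

end Spider

theorem stmt17_general (k : ℕ) (d : Fin k → ℕ)
    (hnc : 3 ≤ (Finset.univ.filter (fun i : Fin k => 2 ≤ d i)).card) :
    Pb (spider k d) = Mc (spider k d) ∧
    Pb (spider k d) = (∑ m : Fin k, (d m - 1)) + 1 := by
  obtain ⟨i₀, hi₀⟩ := card_pos.1 (by omega : 0 < (univ.filter (2 ≤ d ·)).card)
  have hlong : 0 < d i₀ := by
    rw [mem_filter] at hi₀
    omega
  obtain ⟨hPb, hMc⟩ := pb_eq_card_and_mc_eq_card (leafBroadcast_isPackingBroadcast i₀)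
    (spiderNonleaves_isMulticover hnc) ((sum_leafBroadcast hlong).trans card_spiderNonleaves.symm)
  rw [card_spiderNonleaves] at hPb hMc
  exact ⟨hPb.trans hMc.symm, hPb⟩

/-- for a spider that is not a caterpillar (at least three branches of
length at least `2`), `P_b(T) = M_c(T) = Σ_m (d_m - 1) + 1`. -/
theorem stmt17 (k : ℕ) (hk : 3 ≤ k) (d : Fin k → ℕ) (hd : ∀ i, 1 ≤ d i)
    (hmono : Monotone d)
    (hnc : 3 ≤ (Finset.univ.filter (fun i : Fin k => 2 ≤ d i)).card) :
    Pb (spider k d) = Mc (spider k d) ∧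
    Pb (spider k d) = (∑ m : Fin k, (d m - 1)) + 1 :=
  stmt17_general k d hnc
end
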